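/- arXiv:2305.10587 — 2 statements merged into one kernel-verified Lean document; each statement's English description precedes it below -/
import Mathlib

section
/- (Proposition 1) Let N ≥ 2, 2 ≤ k ≤ N, and let c : {0,1}^N → ℝ be any correlator function. Then |S_N^+[c]| ≤ 2^{N−k} · max_{y ∈ {0,1}^{N−k}, ε ∈ {+,−}} |S_{k,y}^ε[c]|. In particular, if a strategy achieves value s_N = |S_N^+[c]| for the N-partite Svetlichny expression, then there exist y ∈ {0,1}^{N−k} and a sign ε ∈ {+,−} such that |S_{k,y}^ε[c]| ≥ s_N / 2^{N−k}. -/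
/-- Hamming weight of a bit string. -/
def wt {n : ℕ} (x : Fin n → Fin 2) : ℕ := ∑ i, (x i : ℕ)

/-- The `n`-partite Svetlichny expression `S_n^+` of a correlator function. -/
def Splus {n : ℕ} (c : (Fin n → Fin 2) → ℝ) : ℝ :=
  ∑ x : Fin n → Fin 2, (-1 : ℝ) ^ (wt x * (wt x + 1) / 2) * c x

/-- The `n`-partite Svetlichny expression `S_n^-` of a correlator function. -/
def Sminus {n : ℕ} (c : (Fin n → Fin 2) → ℝ) : ℝ :=
  ∑ x : Fin n → Fin 2, (-1 : ℝ) ^ (wt x * (wt x - 1) / 2) * c x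

/-- The restricted `k`-partite Svetlichny expression `S_{k,y}^+`, where the inputs of the
last `m` (grouped) coordinates are fixed to `y`. -/
def SplusRes {k m : ℕ} (c : (Fin (k + m) → Fin 2) → ℝ) (y : Fin m → Fin 2) : ℝ :=
  ∑ z : Fin k → Fin 2, (-1 : ℝ) ^ (wt z * (wt z + 1) / 2) * c (Fin.append z y)

/-- The restricted `k`-partite Svetlichny expression `S_{k,y}^-`. -/
def SminusRes {k m : ℕ} (c : (Fin (k + m) → Fin 2) → ℝ) (y : Fin m → Fin 2) : ℝ :=
  ∑ z : Fin k → Fin 2, (-1 : ℝ) ^ (wt z * (wt z - 1) / 2) * c (Fin.append z y)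

lemma tri_add (a b : ℕ) : (a+b)*((a+b)+1)/2 = a*(a+1)/2 + b*(b+1)/2 + a*b := by
  obtain ⟨a', ha⟩ := Nat.even_mul_succ_self a
  obtain ⟨b', hb⟩ := Nat.even_mul_succ_self b
  have h : (a+b)*((a+b)+1) = a*(a+1) + b*(b+1) + 2*(a*b) := by ring
  rw [h, ha, hb]
  generalize a*b = p
  omega

lemma tri_shift (a : ℕ) : a*(a+1)/2 + a = a*(a-1)/2 + 2*a := by
  cases a with
  | zero => rfl
  | succ n =>
    obtain ⟨p, hp⟩ := Nat.even_mul_succ_self n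
    have h1 : (n+1)*((n+1)+1) = n*(n+1) + 2*(n+1) := by ring
    have h2 : (n+1)*((n+1)-1) = n*(n+1) := by
      rw [Nat.add_sub_cancel, Nat.mul_comm]
    rw [h1, h2, hp]
    omega

lemma wt_append {k m : ℕ} (z : Fin k → Fin 2) (y : Fin m → Fin 2) :
    wt (Fin.append z y) = wt z + wt y := by
  simp [wt, Fin.sum_univ_add, Fin.append_left, Fin.append_right]

lemma sign_append (a b : ℕ) :
    ((-1 : ℝ)) ^ ((a+b)*((a+b)+1)/2) =
      (-1 : ℝ) ^ (b*(b+1)/2) *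
        (if Even b then (-1 : ℝ) ^ (a*(a+1)/2) else (-1 : ℝ) ^ (a*(a-1)/2)) := by
  rw [tri_add, pow_add, pow_add]
  by_cases hb : Even b
  · rw [if_pos hb]
    have : ((-1 : ℝ)) ^ (a*b) = 1 := Even.neg_one_pow (hb.mul_left a)
    rw [this]
    ring
  · rw [if_neg hb]
    have hb' : Odd b := Nat.not_even_iff_odd.mp hb
    have h1 : ((-1 : ℝ)) ^ (a*b) = (-1 : ℝ) ^ a := by
      rw [mul_comm a b, pow_mul, Odd.neg_one_pow hb']
    have h2 : ((-1 : ℝ)) ^ (a*(a+1)/2) * (-1 : ℝ) ^ a = (-1 : ℝ) ^ (a*(a-1)/2) := by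
      rw [← pow_add, tri_shift, pow_add]
      simp [pow_mul]
    rw [h1, mul_assoc, mul_comm ((-1:ℝ)^(b*(b+1)/2)) _, ← mul_assoc, h2]
    ring

lemma splus_decomp {k m : ℕ} (c : (Fin (k + m) → Fin 2) → ℝ) :
    Splus c = ∑ y : Fin m → Fin 2, (-1 : ℝ) ^ (wt y * (wt y + 1) / 2) *
      (if Even (wt y) then SplusRes c y else SminusRes c y) := by
  rw [Splus, ← Equiv.sum_comp (Fin.appendEquiv k m), Fintype.sum_prod_type_right]
  refine Finset.sum_congr rfl fun y _ => ?_
  by_cases hy : Even (wt y)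
  · rw [if_pos hy, SplusRes, Finset.mul_sum]
    refine Finset.sum_congr rfl fun z _ => ?_
    show (-1:ℝ) ^ (wt (Fin.append z y) * (wt (Fin.append z y) + 1) / 2) * c (Fin.append z y) = _
    rw [wt_append, sign_append, if_pos hy]
    ring
  · rw [if_neg hy, SminusRes, Finset.mul_sum]
    refine Finset.sum_congr rfl fun z _ => ?_
    show (-1:ℝ) ^ (wt (Fin.append z y) * (wt (Fin.append z y) + 1) / 2) * c (Fin.append z y) = _
    rw [wt_append, sign_append, if_neg hy]
    ring

/-- Proposition 1: `|S_N^+[c]| ≤ 2^{N-k} · max_{y,ε} |S_{k,y}^ε[c]|`; in particular there is a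
restricted `k`-partite Svetlichny expression achieving at least `|S_N^+[c]| / 2^{N-k}`. -/
theorem stmt_3 (k m : ℕ) (hk : 2 ≤ k) (c : (Fin (k + m) → Fin 2) → ℝ) :
    |Splus c| ≤ 2 ^ m *
      Finset.univ.sup' Finset.univ_nonempty
        (fun y : Fin m → Fin 2 => max |SminusRes c y| |SplusRes c y|) ∧
    ∃ y : Fin m → Fin 2,
      |Splus c| / 2 ^ m ≤ |SminusRes c y| ∨ |Splus c| / 2 ^ m ≤ |SplusRes c y| := by
  set M := Finset.univ.sup' Finset.univ_nonempty
      (fun y : Fin m → Fin 2 => max |SminusRes c y| |SplusRes c y|) with hM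
  have key : |Splus c| ≤ 2 ^ m * M := by
    rw [splus_decomp]
    calc |∑ y : Fin m → Fin 2, (-1 : ℝ) ^ (wt y * (wt y + 1) / 2) *
          (if Even (wt y) then SplusRes c y else SminusRes c y)|
        ≤ ∑ y : Fin m → Fin 2, |(-1 : ℝ) ^ (wt y * (wt y + 1) / 2) *
          (if Even (wt y) then SplusRes c y else SminusRes c y)| :=
          Finset.abs_sum_le_sum_abs _ _
      _ ≤ ∑ _y : Fin m → Fin 2, M := by
          refine Finset.sum_le_sum fun y _ => ?_
          rw [abs_mul, abs_pow, abs_neg, abs_one, one_pow, one_mul]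
          have hle : |if Even (wt y) then SplusRes c y else SminusRes c y| ≤
              max |SminusRes c y| |SplusRes c y| := by
            by_cases hy : Even (wt y)
            · rw [if_pos hy]; exact le_max_right _ _
            · rw [if_neg hy]; exact le_max_left _ _
          exact hle.trans (Finset.le_sup' (fun y : Fin m → Fin 2 => max |SminusRes c y| |SplusRes c y|) (Finset.mem_univ y))
      _ = 2 ^ m * M := by
          rw [Finset.sum_const, nsmul_eq_mul]
          norm_num
  refine ⟨key, ?_⟩
  obtain ⟨y, -, hy⟩ := Finset.exists_mem_eq_sup' (Finset.univ_nonempty)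
      (fun y : Fin m → Fin 2 => max |SminusRes c y| |SplusRes c y|)
  refine ⟨y, ?_⟩
  have h2 : (0:ℝ) < 2 ^ m := by positivity
  have : |Splus c| / 2 ^ m ≤ M := by
    rw [div_le_iff₀ h2, mul_comm]; exact key
  rw [hM, hy] at this
  rcases le_max_iff.mp this with h | h
  · exact Or.inl h
  · exact Or.inr h
end

section
/- (Maximal quantum violation by the graph state with explicit Pauli measurements) Let N ≥ 2 and let ψ_G = 2^{−N/2} Σ_{τ ∈ {0,1}^N} (−1)^{w(τ)(w(τ)−1)/2} |τ⟩ ∈ (ℂ²)^{⊗N} be the fully connected graph state. Define binary observables: Ā_0^{(1)} = (σ_x − σ_z)/√2, Ā_1^{(1)} = −(σ_x + σ_z)/√2, and Ā_0^{(i)} = σ_z, Ā_1^{(i)} = σ_x for i = 2,…,N. Then the Svetlichny–Bell operator Ŝ_N^+ = Σ_{x ∈ {0,1}^N} (−1)^{w(x)(w(x)+1)/2} Ā_{x_1}^{(1)} ⊗ … ⊗ Ā_{x_N}^{(N)} satisfies ⟨ψ_G, Ŝ_N^+ ψ_G⟩ = 2^{N−1}√2, i.e. these measurements on ψ_G maximally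 violate the N-partite Svetlichny inequality. -/
open Matrix

noncomputable section

/-- The Svetlichny sign `(-1)^{w(x)(w(x)+1)/2}`. -/
def sgn {n : ℕ} (x : Fin n → Fin 2) : ℂ := (-1) ^ (wt x * (wt x + 1) / 2)

/-- The Pauli `σ_x` matrix. -/
def pauliX : Matrix (Fin 2) (Fin 2) ℂ := !![0, 1; 1, 0]

/-- The Pauli `σ_z` matrix. -/
def pauliZ : Matrix (Fin 2) (Fin 2) ℂ := !![1, 0; 0, -1]

/-- The fully connected graph state on `N` qubits:
`ψ_G = 2^{-N/2} Σ_τ (-1)^{w(τ)(w(τ)-1)/2} |τ⟩`. -/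
def psiG (N : ℕ) : (Fin N → Fin 2) → ℂ :=
  fun τ => (-1 : ℂ) ^ (wt τ * (wt τ - 1) / 2) / (Real.sqrt 2 : ℂ) ^ N

/-- The qubit observables maximally violating the Svetlichny inequality on `ψ_G`:
`Ā_0^{(1)} = (σ_x - σ_z)/√2`, `Ā_1^{(1)} = -(σ_x + σ_z)/√2` for the first party and
`Ā_0^{(i)} = σ_z`, `Ā_1^{(i)} = σ_x` for the other parties. -/
def Aop (N : ℕ) (i : Fin N) (b : Fin 2) : Matrix (Fin 2) (Fin 2) ℂ :=
  if (i : ℕ) = 0 then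
    (if b = 0 then ((Real.sqrt 2 : ℂ))⁻¹ • (pauliX - pauliZ)
      else (-((Real.sqrt 2 : ℂ))⁻¹) • (pauliX + pauliZ))
  else (if b = 0 then pauliZ else pauliX)

/-- The corresponding `N`-partite Svetlichny–Bell operator on `(ℂ²)^{⊗N}`. -/
def svetQubit (N : ℕ) : Matrix (Fin N → Fin 2) (Fin N → Fin 2) ℂ :=
  ∑ x : Fin N → Fin 2,
    sgn x • (Matrix.of fun p q => ∏ i, Aop N i (x i) (p i) (q i))

/-! The first party's observables are combinations of `σ_z` and `σ_x`, so by multilinearity of the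
Kronecker product the Bell expectation reduces to expectations in `ψ_G` of Pauli strings
`σ_s = ⊗ᵢ (σ_x if sᵢ = 1 else σ_z)`. Such a string sends `|p + s⟩` to `±|p⟩`, and comparing the
signs `(-1)^{C(w,2)}` of `ψ_G` at `p` and `p + s` through `w(p + s) + 2⟨p, s⟩ = w(p) + w(s)` gives
`⟨ψ_G, σ_s ψ_G⟩ = (-1)^{C(w(s),2)}` for odd `w(s)` and `0` for even `w(s)` (when `N ≥ 1`).
Feeding this into the Svetlichny sum, each of its `2^N` terms contributes exactly `1/√2`. -/

open Finset

lemma Nat.choose_two_add_two_mul {a b t u : ℕ} (h : u + 2 * t = a + b) :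
    u.choose 2 + 2 * t * (a + b) = a.choose 2 + b.choose 2 + a * b + t + 2 * t * t := by
  have hu : (u : ℚ) = a + b - 2 * t := by
    rw [eq_sub_iff_add_eq]; exact_mod_cast h
  rw [← Nat.cast_inj (R := ℚ)]
  push_cast [Nat.cast_choose_two, hu]
  ring

lemma Nat.even_choose_two_add_choose_two_iff {a b t u : ℕ} (h : u + 2 * t = a + b) :
    Even (a.choose 2 + u.choose 2 + (a + t)) ↔ Even (b.choose 2 + a * (b + 1)) := by
  have key := congrArg Even (Nat.choose_two_add_two_mul h)
  simp only [eq_iff_iff, Nat.even_add, Nat.even_mul, even_two, true_or, iff_true] at key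
  simp only [Nat.even_add, Nat.even_mul, Nat.even_add_one]
  tauto

lemma neg_one_pow_choose_two_succ {R : Type*} [Monoid R] [HasDistribNeg R] (k : ℕ) :
    (-1 : R) ^ (k + 1).choose 2 = (-1) ^ k.choose 2 * (-1) ^ k := by
  rw [Nat.choose_succ_succ, Nat.choose_one_right, add_comm, pow_add]

lemma ofReal_sqrt_two_mul_self : (Real.sqrt 2 : ℂ) * Real.sqrt 2 = 2 := by
  rw [← Complex.ofReal_mul, Real.mul_self_sqrt zero_le_two, Complex.ofReal_ofNat]

lemma wt_add_add_two_mul {N : ℕ} (p s : Fin N → Fin 2) :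
    wt (p + s) + 2 * ∑ i, (p i : ℕ) * s i = wt p + wt s := by
  have hbit : ∀ a b : Fin 2, ((a + b : Fin 2) : ℕ) + 2 * (a * b) = a + b := by decide
  simp only [wt, mul_sum, ← sum_add_distrib, Pi.add_apply, hbit]

lemma wt_cons {n : ℕ} (a : Fin 2) (y : Fin n → Fin 2) :
    wt (Fin.cons a y : Fin (n + 1) → Fin 2) = a + wt y :=
  Fin.sum_univ_succ _

lemma sum_pow_wt {R : Type*} [CommSemiring R] (N : ℕ) (c : R) :
    ∑ p : Fin N → Fin 2, c ^ wt p = (1 + c) ^ N := by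
  have hc : 1 + c = ∑ b : Fin 2, c ^ (b : ℕ) := by simp [Fin.sum_univ_two]
  simp only [wt, ← prod_pow_eq_pow_sum, hc, Fintype.sum_pow]

lemma neg_one_pow_choose_two_wt_add {N : ℕ} (p s : Fin N → Fin 2) :
    (-1 : ℂ) ^ (wt p).choose 2 * (-1) ^ (wt (p + s)).choose 2 * ∏ i, (-1) ^ ((p i : ℕ) + p i * s i)
      = (-1) ^ (wt s).choose 2 * (-1) ^ (wt p * (wt s + 1)) := by
  rw [prod_pow_eq_pow_sum, sum_add_distrib, ← pow_add, ← pow_add, ← pow_add]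
  exact neg_one_pow_congr (Nat.even_choose_two_add_choose_two_iff (wt_add_add_two_mul p s))

def kronPi {ι m n R : Type*} [Fintype ι] [CommMonoid R] (A : ι → Matrix m n R) :
    Matrix (ι → m) (ι → n) R :=
  of fun p q => ∏ i, A i (p i) (q i)

lemma kronPi_cons_add {n : ℕ} {m k R : Type*} [CommSemiring R] (α β : R) (B C : Matrix m k R)
    (A : Fin n → Matrix m k R) :
    kronPi (Fin.cons (α • B + β • C) A : Fin (n + 1) → Matrix m k R)
      = α • kronPi (Fin.cons B A : Fin (n + 1) → _)
        + β • kronPi (Fin.cons C A : Fin (n + 1) → _) := by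
  ext p q
  simp only [kronPi, Fin.prod_univ_succ, Fin.cons_zero, Fin.cons_succ, of_apply, Matrix.add_apply,
    Matrix.smul_apply, smul_eq_mul]
  ring

def expectation {ι : Type*} [Fintype ι] (ψ : ι → ℂ) (M : Matrix ι ι ℂ) : ℂ := star ψ ⬝ᵥ (M *ᵥ ψ)

lemma expectation_add {ι : Type*} [Fintype ι] (ψ : ι → ℂ) (M M' : Matrix ι ι ℂ) :
    expectation ψ (M + M') = expectation ψ M + expectation ψ M' := by
  simp only [expectation, add_mulVec, dotProduct_add]

lemma expectation_smul {ι : Type*} [Fintype ι] (ψ : ι → ℂ) (α : ℂ) (M : Matrix ι ι ℂ) :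
    expectation ψ (α • M) = α * expectation ψ M := by
  simp only [expectation, smul_mulVec, dotProduct_smul, smul_eq_mul]

lemma expectation_sum {ι κ : Type*} [Fintype ι] (ψ : ι → ℂ) (s : Finset κ) (M : κ → Matrix ι ι ℂ) :
    expectation ψ (∑ k ∈ s, M k) = ∑ k ∈ s, expectation ψ (M k) := by
  simp only [expectation, sum_mulVec, dotProduct_sum]

def pauli (b : Fin 2) : Matrix (Fin 2) (Fin 2) ℂ := if b = 0 then pauliZ else pauliX

-- the phase `(-1)^(p + p b)` is `(-1)^p` for `σ_z` and `1` for `σ_x`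
lemma pauli_apply (b p q : Fin 2) :
    pauli b p q = if q = p + b then (-1) ^ ((p : ℕ) + p * b) else 0 := by
  fin_cases b <;> fin_cases p <;> fin_cases q <;> simp [pauli, pauliX, pauliZ]

lemma kronPi_pauli_mulVec {ι : Type*} [Fintype ι] [DecidableEq ι] (s : ι → Fin 2)
    (ψ : (ι → Fin 2) → ℂ) (p : ι → Fin 2) :
    (kronPi (fun i => pauli (s i)) *ᵥ ψ) p
      = (∏ i, (-1 : ℂ) ^ ((p i : ℕ) + p i * s i)) * ψ (p + s) := by
  have hq : ∀ q : ι → Fin 2, (∀ i, q i = p i + s i) ↔ q = p + s := fun q => funext_iff.symm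
  simp only [mulVec, dotProduct, kronPi, of_apply, pauli_apply, Fintype.prod_ite_zero, hq,
    ite_mul, zero_mul, sum_ite_eq', mem_univ, if_true]

lemma psiG_eq_neg_one_pow_choose_two (N : ℕ) (τ : Fin N → Fin 2) :
    psiG N τ = (-1) ^ (wt τ).choose 2 / (Real.sqrt 2 : ℂ) ^ N := by
  rw [psiG, Nat.choose_two_right]

lemma star_psiG (N : ℕ) : star (psiG N) = psiG N := by
  ext τ
  simp [psiG_eq_neg_one_pow_choose_two, Complex.conj_ofReal]

lemma psiG_mul_kronPi_pauli_mulVec (N : ℕ) (s p : Fin N → Fin 2) :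
    psiG N p * (kronPi (fun i => pauli (s i)) *ᵥ psiG N) p
      = (-1) ^ (wt s).choose 2 / 2 ^ N * ((-1) ^ (wt s + 1)) ^ wt p := by
  calc psiG N p * (kronPi (fun i => pauli (s i)) *ᵥ psiG N) p
      = (-1) ^ (wt p).choose 2 * (-1) ^ (wt (p + s)).choose 2
          * (∏ i, (-1) ^ ((p i : ℕ) + p i * s i)) / ((Real.sqrt 2 : ℂ) * Real.sqrt 2) ^ N := by
        rw [kronPi_pauli_mulVec, psiG_eq_neg_one_pow_choose_two, psiG_eq_neg_one_pow_choose_two,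
          mul_pow]
        ring
    _ = _ := by
        rw [neg_one_pow_choose_two_wt_add, ofReal_sqrt_two_mul_self, ← pow_mul,
          mul_comm (wt s + 1)]
        ring

theorem expectation_psiG_kronPi_pauli (N : ℕ) (s : Fin N → Fin 2) :
    expectation (psiG N) (kronPi fun i => pauli (s i))
      = (-1) ^ (wt s).choose 2 * ((1 - (-1) ^ wt s) / 2) ^ N := by
  simp only [expectation, star_psiG, dotProduct, psiG_mul_kronPi_pauli_mulVec, ← mul_sum,
    sum_pow_wt, pow_succ, mul_neg_one, ← sub_eq_add_neg, div_pow]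
  ring

lemma expectation_psiG_kronPi_cons_pauli (n : ℕ) (t : Fin 2) (y : Fin n → Fin 2) :
    expectation (psiG (n + 1)) (kronPi (Fin.cons (pauli t) fun i => pauli (y i)))
      = (-1) ^ (t + wt y).choose 2 * ((1 - (-1) ^ (t + wt y)) / 2) ^ (n + 1) := by
  rw [← wt_cons, ← expectation_psiG_kronPi_pauli]
  congr 2
  funext i
  cases i using Fin.cases <;> rfl

lemma Aop_succ (n : ℕ) (i : Fin n) (b : Fin 2) : Aop (n + 1) i.succ b = pauli b := by
  simp [Aop, pauli]

lemma Aop_zero_zero (n : ℕ) :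
    Aop (n + 1) 0 0 = (-(Real.sqrt 2 : ℂ)⁻¹) • pauli 0 + (Real.sqrt 2 : ℂ)⁻¹ • pauli 1 := by
  simp only [Aop, Fin.val_zero, if_true, pauli, if_neg one_ne_zero]
  module

lemma Aop_zero_one (n : ℕ) :
    Aop (n + 1) 0 1 = (-(Real.sqrt 2 : ℂ)⁻¹) • pauli 0 + (-(Real.sqrt 2 : ℂ)⁻¹) • pauli 1 := by
  simp only [Aop, Fin.val_zero, if_true, pauli, if_neg one_ne_zero]
  module

lemma kronPi_Aop_cons (n : ℕ) (a : Fin 2) (y : Fin n → Fin 2) :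
    kronPi (fun i => Aop (n + 1) i ((Fin.cons a y : Fin (n + 1) → Fin 2) i))
      = kronPi (Fin.cons (Aop (n + 1) 0 a) fun i => pauli (y i)) := by
  congr 1
  funext i
  cases i using Fin.cases <;> simp [Aop_succ]

lemma sgn_eq_neg_one_pow_choose_two {n : ℕ} (x : Fin n → Fin 2) :
    sgn x = (-1) ^ (wt x + 1).choose 2 := by
  rw [sgn, Nat.choose_two_right, Nat.add_sub_cancel, mul_comm]

lemma svetQubit_eq (N : ℕ) :
    svetQubit N = ∑ x : Fin N → Fin 2, sgn x • kronPi fun i => Aop N i (x i) :=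
  rfl

theorem sgn_cons_mul_expectation_psiG_kronPi_Aop (n : ℕ) (a : Fin 2) (y : Fin n → Fin 2) :
    sgn (Fin.cons a y : Fin (n + 1) → Fin 2) * expectation (psiG (n + 1))
      (kronPi fun i => Aop (n + 1) i ((Fin.cons a y : Fin (n + 1) → Fin 2) i))
      = (Real.sqrt 2 : ℂ)⁻¹ := by
  rw [kronPi_Aop_cons, sgn_eq_neg_one_pow_choose_two, wt_cons]
  have hsq : (-1 : ℂ) ^ (wt y).choose 2 * (-1) ^ (wt y).choose 2 = 1 := by
    rw [← pow_add, ← two_mul, pow_mul]; simp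
  -- once `(-1)^(w y) = ±1` is substituted, each case reduces to `((-1)^C(w y, 2))² = 1`
  fin_cases a <;>
  · simp only [Fin.zero_eta, Fin.mk_one, Aop_zero_zero, Aop_zero_one, kronPi_cons_add,
      expectation_add, expectation_smul, expectation_psiG_kronPi_cons_pauli, Fin.val_zero,
      Fin.val_one, zero_add, add_comm 1, neg_one_pow_choose_two_succ, pow_succ, mul_neg_one]
    rcases neg_one_pow_eq_or ℂ (wt y) with he | he <;>
    · rw [he]
      norm_num
      linear_combination (Real.sqrt 2 : ℂ)⁻¹ * hsq

/-- Maximal quantum violation by the fully connected graph state with explicit Pauli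
measurements: `⟨ψ_G, Ŝ_N^+ ψ_G⟩ = 2^{N-1}√2`. -/
theorem stmt_13 (N : ℕ) (hN : 2 ≤ N) :
    ∑ p, (starRingEnd ℂ) (psiG N p) * (svetQubit N).mulVec (psiG N) p =
      ((2 ^ (N - 1) * Real.sqrt 2 : ℝ) : ℂ) := by
  obtain ⟨n, rfl⟩ : ∃ n, N = n + 1 := ⟨N - 1, by omega⟩
  change expectation (psiG (n + 1)) (svetQubit (n + 1)) = _
  have hterm : ∀ x : Fin (n + 1) → Fin 2,
      sgn x * expectation (psiG (n + 1)) (kronPi fun i => Aop (n + 1) i (x i))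
        = (Real.sqrt 2 : ℂ)⁻¹ := by
    intro x
    rw [← Fin.cons_self_tail x]
    exact sgn_cons_mul_expectation_psiG_kronPi_Aop n (x 0) (Fin.tail x)
  simp only [svetQubit_eq, expectation_sum, expectation_smul, hterm, sum_const, card_univ,
    Fintype.card_fun, Fintype.card_fin, nsmul_eq_mul, Nat.add_sub_cancel]
  have hne : (Real.sqrt 2 : ℂ) ≠ 0 := by exact_mod_cast Real.sqrt_ne_zero'.mpr two_pos
  push_cast
  field_simp
  rw [sq, ofReal_sqrt_two_mul_self, pow_succ']
end
end
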